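/- arXiv:2003.02518 — 6 statements merged into one kernel-verified Lean document; each statement's English description precedes it below -/
import Mathlib

section
/- If p is sampled uniformly at random from a nonempty finite set A ⊆ ℝ^d, then E[φ_A(p)] ≤ 2·φ_A(μ_A). -/
/-!
Expanding `‖a - c‖² = ‖(a - μ) + (μ - c)‖²` and using that the deviations `a - μ` from the
centroid sum to zero gives `φ_A(c) = φ_A(μ) + |A| ‖c - μ‖²`. Averaging over `c = p ∈ A`, the
second term averages to `φ_A(μ)` again, so `E[φ_A(p)] = 2 φ_A(μ)`.
-/

open scoped BigOperators
open Finset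

namespace KMeans

section Centroid

variable {M : Type*} [AddCommGroup M] [Module ℝ M]

noncomputable def centroid (s : Finset M) : M := (#s : ℝ)⁻¹ • ∑ x ∈ s, x

theorem sum_sub_centroid (s : Finset M) : ∑ a ∈ s, (a - centroid s) = 0 := by
  rcases s.eq_empty_or_nonempty with rfl | hs
  · simp
  have hcard : (#s : ℝ) ≠ 0 := by exact_mod_cast hs.card_ne_zero
  rw [sum_sub_distrib, sum_const, centroid, ← Nat.cast_smul_eq_nsmul ℝ, smul_smul,
    mul_inv_cancel₀ hcard, one_smul, sub_self]

end Centroid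

variable {E : Type*} [NormedAddCommGroup E] [InnerProductSpace ℝ E]

def cost (s : Finset E) (c : E) : ℝ := ∑ a ∈ s, ‖a - c‖ ^ 2

theorem cost_eq_cost_centroid_add (s : Finset E) (c : E) :
    cost s c = cost s (centroid s) + #s * ‖c - centroid s‖ ^ 2 := by
  set μ := centroid s
  have expand (a : E) :
      ‖a - c‖ ^ 2 = ‖a - μ‖ ^ 2 + 2 * inner ℝ (a - μ) (μ - c) + ‖c - μ‖ ^ 2 := by
    rw [show a - c = (a - μ) + (μ - c) by abel, norm_add_sq_real, norm_sub_rev μ c]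
  calc cost s c
      = cost s μ + 2 * inner ℝ (∑ a ∈ s, (a - μ)) (μ - c) + #s * ‖c - μ‖ ^ 2 := by
        simp only [cost, expand, sum_add_distrib, ← mul_sum, ← sum_inner, sum_const,
          nsmul_eq_mul]
    _ = cost s μ + #s * ‖c - μ‖ ^ 2 := by
        rw [sum_sub_centroid, inner_zero_left, mul_zero, add_zero]

theorem sum_cost_eq (s : Finset E) :
    ∑ p ∈ s, cost s p = 2 * #s * cost s (centroid s) := by
  rw [sum_congr rfl fun p _ => cost_eq_cost_centroid_add s p, sum_add_distrib, sum_const,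
    nsmul_eq_mul, ← mul_sum, ← cost]
  ring

theorem inv_card_mul_sum_cost (s : Finset E) :
    (#s : ℝ)⁻¹ * ∑ p ∈ s, cost s p = 2 * cost s (centroid s) := by
  rcases s.eq_empty_or_nonempty with rfl | hs
  · simp [cost]
  have hcard : (#s : ℝ) ≠ 0 := by exact_mod_cast hs.card_ne_zero
  rw [sum_cost_eq]
  field_simp

end KMeans

theorem uniform_sample_two_approx_general (d : ℕ) (A : Finset (EuclideanSpace ℝ (Fin d))) :
    (A.card : ℝ)⁻¹ * ∑ p ∈ A, ∑ a ∈ A, ‖a - p‖ ^ 2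
      ≤ 2 * ∑ a ∈ A, ‖a - (A.card : ℝ)⁻¹ • ∑ x ∈ A, x‖ ^ 2 :=
  (KMeans.inv_card_mul_sum_cost A).le

/-- Lemma 3.1 of Arthur–Vassilvitskii: sampling p uniformly from A gives
    E[φ_A(p)] ≤ 2 φ_A(μ_A). -/
theorem uniform_sample_two_approx (d : ℕ) (A : Finset (EuclideanSpace ℝ (Fin d)))
    (hA : A.Nonempty) :
    (A.card : ℝ)⁻¹ * ∑ p ∈ A, ∑ a ∈ A, ‖a - p‖ ^ 2
      ≤ 2 * ∑ a ∈ A, ‖a - (A.card : ℝ)⁻¹ • ∑ x ∈ A, x‖ ^ 2 :=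
  uniform_sample_two_approx_general d A
end

section
/- Let A ⊆ ℝ^d be a nonempty finite set of points and C a nonempty finite set of centers with Σ_{a∈A} d(a,C)² > 0. If a point p ∈ A is sampled with probability proportional to d(p,C)² (D²-weighting restricted to A), then E[φ_A(C ∪ {p})] ≤ 8·φ_A(μ_A). -/
/-!
Write `D x` for the distance from `x` to the current centres `C`, and `μ` for the centroid of `A`.
By the triangle inequality, `D p² ≤ 2 D a² + 2 ‖a - p‖²` for every `a ∈ A`; averaging over `a`
bounds `D p²` by `2 (φ_A(C) + φ_A({p})) / |A|`. Once `p` is a centre, the new cost of `A` is at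
most both `φ_A(C)` and `φ_A({p})`, so the `D²`-weighted expected cost is at most
`4 Σ_p φ_A({p}) / |A|`. Finally `Σ_{p ∈ A} φ_A({p}) = 2 |A| φ_A({μ})` by the bias–variance
decomposition `φ_A({z}) = φ_A({μ}) + |A| ‖z - μ‖²`.
-/

open Finset Metric

namespace Metric

variable {α : Type*} [PseudoMetricSpace α]

theorem infDist_sq_le_two_mul (x y : α) (s : Set α) :
    infDist x s ^ 2 ≤ 2 * (infDist y s ^ 2 + dist x y ^ 2) :=
  (pow_le_pow_left₀ infDist_nonneg infDist_le_infDist_add_dist 2).trans add_sq_le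

theorem card_mul_infDist_sq_le (A : Finset α) (s : Set α) (x : α) :
    #A * infDist x s ^ 2 ≤ 2 * (∑ a ∈ A, infDist a s ^ 2 + ∑ a ∈ A, dist a x ^ 2) := by
  calc #A * infDist x s ^ 2 = ∑ _a ∈ A, infDist x s ^ 2 := by rw [sum_const, nsmul_eq_mul]
    _ ≤ ∑ a ∈ A, 2 * (infDist a s ^ 2 + dist a x ^ 2) :=
        sum_le_sum fun a _ => dist_comm a x ▸ infDist_sq_le_two_mul x a s
    _ = 2 * (∑ a ∈ A, infDist a s ^ 2 + ∑ a ∈ A, dist a x ^ 2) := by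
        rw [← mul_sum, sum_add_distrib]

theorem sum_infDist_insert_sq_le_sum_infDist_sq (A : Finset α) {s : Set α} (hs : s.Nonempty)
    (x : α) : ∑ a ∈ A, infDist a (insert x s) ^ 2 ≤ ∑ a ∈ A, infDist a s ^ 2 :=
  sum_le_sum fun _ _ => pow_le_pow_left₀ infDist_nonneg
    (infDist_le_infDist_of_subset (Set.subset_insert x s) hs) 2

theorem sum_infDist_insert_sq_le_sum_dist_sq (A : Finset α) (s : Set α) (x : α) :
    ∑ a ∈ A, infDist a (insert x s) ^ 2 ≤ ∑ a ∈ A, dist a x ^ 2 :=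
  sum_le_sum fun _ _ => pow_le_pow_left₀ infDist_nonneg
    (infDist_le_dist_of_mem (Set.mem_insert x s)) 2

theorem card_mul_infDist_sq_mul_sum_infDist_insert_sq_le (A : Finset α) {s : Set α}
    (hs : s.Nonempty) (x : α) :
    #A * (infDist x s ^ 2 * ∑ a ∈ A, infDist a (insert x s) ^ 2)
      ≤ 4 * (∑ a ∈ A, infDist a s ^ 2) * ∑ a ∈ A, dist a x ^ 2 := by
  set Φ := ∑ a ∈ A, infDist a s ^ 2
  set S := ∑ a ∈ A, dist a x ^ 2
  set g := ∑ a ∈ A, infDist a (insert x s) ^ 2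
  have hgΦ : g ≤ Φ := sum_infDist_insert_sq_le_sum_infDist_sq A hs x
  have hgS : g ≤ S := sum_infDist_insert_sq_le_sum_dist_sq A s x
  have hg : 0 ≤ g := sum_nonneg fun _ _ => sq_nonneg _
  have hΦ : 0 ≤ Φ := sum_nonneg fun _ _ => sq_nonneg _
  calc #A * (infDist x s ^ 2 * g) = (#A * infDist x s ^ 2) * g := by ring
    _ ≤ 2 * (Φ + S) * g := mul_le_mul_of_nonneg_right (card_mul_infDist_sq_le A s x) hg
    _ = 2 * (Φ * g + g * S) := by ring
    _ ≤ 2 * (Φ * S + Φ * S) := by gcongr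
    _ = 4 * Φ * S := by ring

end Metric

section Centroid

variable {E : Type*} [NormedAddCommGroup E] [InnerProductSpace ℝ E]

open RealInnerProductSpace

theorem sum_sub_centroid_eq_zero (A : Finset E) :
    ∑ a ∈ A, (a - (#A : ℝ)⁻¹ • ∑ x ∈ A, x) = 0 := by
  rcases A.eq_empty_or_nonempty with rfl | hA
  · simp
  rw [sum_sub_distrib, sum_const, ← Nat.cast_smul_eq_nsmul ℝ,
    smul_inv_smul₀ (Nat.cast_ne_zero.mpr hA.card_pos.ne'), sub_self]

theorem sum_norm_sub_sq_eq_add_card_mul (A : Finset E) (z : E) :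
    ∑ a ∈ A, ‖a - z‖ ^ 2 = ∑ a ∈ A, ‖a - (#A : ℝ)⁻¹ • ∑ x ∈ A, x‖ ^ 2
      + #A * ‖z - (#A : ℝ)⁻¹ • ∑ x ∈ A, x‖ ^ 2 := by
  set μ := (#A : ℝ)⁻¹ • ∑ x ∈ A, x
  calc ∑ a ∈ A, ‖a - z‖ ^ 2 = ∑ a ∈ A, (‖a - μ‖ ^ 2 - 2 * ⟪a - μ, z - μ⟫ + ‖z - μ‖ ^ 2) := by
        refine sum_congr rfl fun a _ => ?_
        rw [← norm_sub_sq_real, sub_sub_sub_cancel_right]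
    _ = ∑ a ∈ A, ‖a - μ‖ ^ 2 - 2 * ⟪∑ a ∈ A, (a - μ), z - μ⟫ + #A * ‖z - μ‖ ^ 2 := by
        rw [sum_add_distrib, sum_sub_distrib, sum_inner, mul_sum, sum_const, nsmul_eq_mul]
    _ = ∑ a ∈ A, ‖a - μ‖ ^ 2 + #A * ‖z - μ‖ ^ 2 := by
        rw [sum_sub_centroid_eq_zero, inner_zero_left, mul_zero, sub_zero]

theorem sum_sum_norm_sub_sq_eq (A : Finset E) :
    ∑ x ∈ A, ∑ a ∈ A, ‖a - x‖ ^ 2 = 2 * #A * ∑ a ∈ A, ‖a - (#A : ℝ)⁻¹ • ∑ x ∈ A, x‖ ^ 2 := by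
  rw [sum_congr rfl fun x _ => sum_norm_sub_sq_eq_add_card_mul A x, sum_add_distrib, sum_const,
    nsmul_eq_mul, ← mul_sum]
  ring

end Centroid

theorem dsq_sample_eight_approx_general (d : ℕ) (A C : Finset (EuclideanSpace ℝ (Fin d)))
    (hA : A.Nonempty) (hC : C.Nonempty) :
    ∑ p ∈ A,
      (Metric.infDist p (C : Set (EuclideanSpace ℝ (Fin d))) ^ 2
          / ∑ a ∈ A, Metric.infDist a (C : Set (EuclideanSpace ℝ (Fin d))) ^ 2)
        * ∑ a ∈ A, Metric.infDist a ((insert p C : Finset _) : Set (EuclideanSpace ℝ (Fin d))) ^ 2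
      ≤ 8 * ∑ a ∈ A, ‖a - (A.card : ℝ)⁻¹ • ∑ x ∈ A, x‖ ^ 2 := by
  simp only [coe_insert]
  set s : Set (EuclideanSpace ℝ (Fin d)) := ↑C
  set Φ := ∑ a ∈ A, infDist a s ^ 2
  set V := ∑ a ∈ A, ‖a - (#A : ℝ)⁻¹ • ∑ x ∈ A, x‖ ^ 2
  have hweighted : #A * ∑ p ∈ A, infDist p s ^ 2 * ∑ a ∈ A, infDist a (insert p s) ^ 2
      ≤ #A * (8 * V * Φ) :=
    calc _ ≤ ∑ p ∈ A, 4 * Φ * ∑ a ∈ A, dist a p ^ 2 := by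
          rw [mul_sum]
          exact sum_le_sum fun p _ =>
            card_mul_infDist_sq_mul_sum_infDist_insert_sq_le A (coe_nonempty.mpr hC) p
      _ = #A * (8 * V * Φ) := by
          simp only [dist_eq_norm]
          rw [← mul_sum, sum_sum_norm_sub_sq_eq]
          ring
  -- `div_le_of_le_mul₀` also covers `Φ = 0`, where every sampling weight is the junk value `_ / 0 = 0`.
  calc _ = (∑ p ∈ A, infDist p s ^ 2 * ∑ a ∈ A, infDist a (insert p s) ^ 2) / Φ := by
        rw [sum_div]
        exact sum_congr rfl fun p _ => div_mul_eq_mul_div _ _ _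
    _ ≤ 8 * V := div_le_of_le_mul₀ (sum_nonneg fun _ _ => sq_nonneg _) (by positivity)
        (le_of_mul_le_mul_left hweighted (Nat.cast_pos.mpr hA.card_pos))

/-- Lemma 3.2 of Arthur–Vassilvitskii: sampling p ∈ A by D²-weighting gives
    E[φ_A(C ∪ {p})] ≤ 8 φ_A(μ_A). -/
theorem dsq_sample_eight_approx (d : ℕ) (A C : Finset (EuclideanSpace ℝ (Fin d)))
    (hA : A.Nonempty) (hC : C.Nonempty)
    (hpos : 0 < ∑ a ∈ A, Metric.infDist a (C : Set (EuclideanSpace ℝ (Fin d))) ^ 2) :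
    ∑ p ∈ A,
      (Metric.infDist p (C : Set (EuclideanSpace ℝ (Fin d))) ^ 2
          / ∑ a ∈ A, Metric.infDist a (C : Set (EuclideanSpace ℝ (Fin d))) ^ 2)
        * ∑ a ∈ A, Metric.infDist a ((insert p C : Finset _) : Set (EuclideanSpace ℝ (Fin d))) ^ 2
      ≤ 8 * ∑ a ∈ A, ‖a - (A.card : ℝ)⁻¹ • ∑ x ∈ A, x‖ ^ 2 :=
  dsq_sample_eight_approx_general d A C hA hC
end

section
/- Fix a finite set X ⊆ ℝ^d and a point c₁ ∈ X. The set function g(C) = φ_X({c₁}) − φ_X({c₁} ∪ C), defined on finite subsets C of X, is monotone and submodular: for all C₁ ⊆ C₂ ⊆ X and c ∈ X, g(C₁ ∪ {c}) − g(C₁) ≥ g(C₂ ∪ {c}) − g(C₂). -/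
open scoped BigOperators

attribute [local instance] Classical.propDecidable

lemma infDist_insert' {α : Type*} [MetricSpace α] (x c : α) (s : Set α) (hs : s.Nonempty) :
    Metric.infDist x (insert c s) = min (dist x c) (Metric.infDist x s) := by
  have : insert c s = {c} ∪ s := by simp
  rw [Metric.infDist, this, EMetric.infEdist_union, EMetric.infEdist_singleton,
    ENNReal.toReal_min (edist_ne_top x c) (Metric.infEdist_ne_top hs)]
  rw [dist_edist]; rfl

lemma infDist_mono' {α : Type*} [MetricSpace α] (x : α) {s t : Set α} (hs : s.Nonempty)
    (h : s ⊆ t) : Metric.infDist x t ≤ Metric.infDist x s :=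
  Metric.infDist_le_infDist_of_subset h hs

/-- Pointwise submodularity of squared min-distance. -/
lemma sq_min_submod {a b t : ℝ} (ha : 0 ≤ b) (hb : b ≤ a) (ht : 0 ≤ t) :
    a ^ 2 - min a t ^ 2 ≥ b ^ 2 - min b t ^ 2 := by
  rcases le_total a t with h1 | h1
  · rw [min_eq_left h1, min_eq_left (hb.trans h1)]; ring_nf; exact le_refl _
  · rcases le_total b t with h2 | h2
    · rw [min_eq_right h1, min_eq_left h2]
      have : t ^ 2 ≤ a ^ 2 := by nlinarith
      linarith
    · rw [min_eq_right h1, min_eq_right h2]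
      have : b ^ 2 ≤ a ^ 2 := by nlinarith
      linarith

/-- The function C ↦ φ_X({c₁}) − φ_X({c₁} ∪ C) is monotone and submodular
    (diminishing returns of adding a center). -/
theorem kmeans_cost_gain_monotone_submodular (d : ℕ)
    (X C₁ C₂ : Finset (EuclideanSpace ℝ (Fin d)))
    (c₁ c : EuclideanSpace ℝ (Fin d)) (hc₁ : c₁ ∈ X) (hc : c ∈ X)
    (hC₁X : C₁ ⊆ X) (hC₂X : C₂ ⊆ X) (h12 : C₁ ⊆ C₂) :
    (∑ x ∈ X, Metric.infDist x ((insert c₁ C₂ : Finset _) : Set (EuclideanSpace ℝ (Fin d))) ^ 2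
      ≤ ∑ x ∈ X, Metric.infDist x ((insert c₁ C₁ : Finset _) : Set (EuclideanSpace ℝ (Fin d))) ^ 2)
    ∧
    (∑ x ∈ X, Metric.infDist x ((insert c₁ C₁ : Finset _) : Set (EuclideanSpace ℝ (Fin d))) ^ 2
        - ∑ x ∈ X, Metric.infDist x ((insert c (insert c₁ C₁) : Finset _) : Set (EuclideanSpace ℝ (Fin d))) ^ 2
      ≥ ∑ x ∈ X, Metric.infDist x ((insert c₁ C₂ : Finset _) : Set (EuclideanSpace ℝ (Fin d))) ^ 2
        - ∑ x ∈ X, Metric.infDist x ((insert c (insert c₁ C₂) : Finset _) : Set (EuclideanSpace ℝ (Fin d))) ^ 2) := by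
  have hne1 : ((insert c₁ C₁ : Finset _) : Set (EuclideanSpace ℝ (Fin d))).Nonempty :=
    ⟨c₁, by simp⟩
  have hne2 : ((insert c₁ C₂ : Finset _) : Set (EuclideanSpace ℝ (Fin d))).Nonempty :=
    ⟨c₁, by simp⟩
  have hsub : ((insert c₁ C₁ : Finset _) : Set (EuclideanSpace ℝ (Fin d)))
      ⊆ ((insert c₁ C₂ : Finset _) : Set (EuclideanSpace ℝ (Fin d))) := by
    intro y hy
    simp only [Finset.coe_insert, Set.mem_insert_iff, Finset.mem_coe] at hy ⊢
    exact hy.imp id (fun h => h12 h)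
  have key : ∀ x : EuclideanSpace ℝ (Fin d),
      Metric.infDist x ((insert c₁ C₂ : Finset _) : Set (EuclideanSpace ℝ (Fin d)))
        ≤ Metric.infDist x ((insert c₁ C₁ : Finset _) : Set (EuclideanSpace ℝ (Fin d))) :=
    fun x => infDist_mono' x hne1 hsub
  constructor
  · exact Finset.sum_le_sum fun x _ => by
      have h0 := Metric.infDist_nonneg (x := x)
        (s := ((insert c₁ C₂ : Finset _) : Set (EuclideanSpace ℝ (Fin d))))
      exact pow_le_pow_left₀ h0 (key x) 2
  · rw [ge_iff_le, ← Finset.sum_sub_distrib, ← Finset.sum_sub_distrib]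
    apply Finset.sum_le_sum
    intro x _
    have e1 : ((insert c (insert c₁ C₁) : Finset _) : Set (EuclideanSpace ℝ (Fin d)))
        = insert c ((insert c₁ C₁ : Finset _) : Set (EuclideanSpace ℝ (Fin d))) := by
      simp
    have e2 : ((insert c (insert c₁ C₂) : Finset _) : Set (EuclideanSpace ℝ (Fin d)))
        = insert c ((insert c₁ C₂ : Finset _) : Set (EuclideanSpace ℝ (Fin d))) := by
      simp
    rw [e1, e2, infDist_insert' x c _ hne1, infDist_insert' x c _ hne2]
    have := sq_min_submod (a := Metric.infDist x ((insert c₁ C₁ : Finset _) : Set (EuclideanSpace ℝ (Fin d))))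
      (b := Metric.infDist x ((insert c₁ C₂ : Finset _) : Set (EuclideanSpace ℝ (Fin d))))
      (t := dist x c) Metric.infDist_nonneg (key x) dist_nonneg
    rw [min_comm (dist x c) _, min_comm (dist x c) _]
    linarith
end

section
/- (Markov-based subset extraction) Let A be a finite set, C a set of centers, and suppose that sampling p ∈ A with probability φ_p(C)/φ_A(C) satisfies E[φ_A(C ∪ {p})] ≤ 8 φ*_A, where φ*_A > 0 and φ_A(C) > 10 φ*_A. Then the set A' = {p ∈ A : φ_A(C ∪ {p}) ≤ 10 φ*_A} satisfies φ_{A'}(C) ≥ φ_A(C)/5. -/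
open scoped BigOperators

attribute [local instance] Classical.propDecidable

/-- Markov-based subset extraction: the set A' of points whose sampling settles A carries
    at least 1/5 of the cost of A. -/
theorem good_points_carry_fifth_of_cost (d : ℕ)
    (A C : Finset (EuclideanSpace ℝ (Fin d))) (hC : C.Nonempty)
    (φstarA : ℝ) (hφstar : 0 < φstarA)
    (hcost : 10 * φstarA < ∑ a ∈ A, Metric.infDist a (C : Set (EuclideanSpace ℝ (Fin d))) ^ 2)
    (hE : ∑ p ∈ A,
        (Metric.infDist p (C : Set (EuclideanSpace ℝ (Fin d))) ^ 2
            / ∑ a ∈ A, Metric.infDist a (C : Set (EuclideanSpace ℝ (Fin d))) ^ 2)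
          * ∑ a ∈ A, Metric.infDist a ((insert p C : Finset _) : Set (EuclideanSpace ℝ (Fin d))) ^ 2
        ≤ 8 * φstarA) :
    (∑ a ∈ A, Metric.infDist a (C : Set (EuclideanSpace ℝ (Fin d))) ^ 2) / 5
      ≤ ∑ p ∈ A.filter (fun p =>
          ∑ a ∈ A, Metric.infDist a ((insert p C : Finset _) : Set (EuclideanSpace ℝ (Fin d))) ^ 2
            ≤ 10 * φstarA),
        Metric.infDist p (C : Set (EuclideanSpace ℝ (Fin d))) ^ 2 := by
  classical
  set φ : EuclideanSpace ℝ (Fin d) → ℝ :=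
    fun p => Metric.infDist p (C : Set (EuclideanSpace ℝ (Fin d))) ^ 2 with hφdef
  set ψ : EuclideanSpace ℝ (Fin d) → ℝ :=
    fun p => ∑ a ∈ A,
      Metric.infDist a ((insert p C : Finset _) : Set (EuclideanSpace ℝ (Fin d))) ^ 2 with hψdef
  set S : ℝ := ∑ a ∈ A, φ a with hSdef
  have hS : 0 < S := lt_trans (by positivity) hcost
  have hφnn : ∀ p, 0 ≤ φ p := fun p => by positivity
  have hψnn : ∀ p, 0 ≤ ψ p := fun p => Finset.sum_nonneg fun a _ => by positivity
  set P : EuclideanSpace ℝ (Fin d) → Prop := fun p => ψ p ≤ 10 * φstarA with hPdef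
  -- bad sum bound
  have hbad1 : ∑ p ∈ A.filter (fun p => ¬ P p), (φ p / S) * (10 * φstarA)
      ≤ ∑ p ∈ A.filter (fun p => ¬ P p), (φ p / S) * ψ p := by
    refine Finset.sum_le_sum fun p hp => ?_
    have hpbad : ¬ P p := (Finset.mem_filter.mp hp).2
    have : 10 * φstarA ≤ ψ p := le_of_lt (lt_of_not_ge hpbad)
    exact mul_le_mul_of_nonneg_left this (by positivity)
  have hbad2 : ∑ p ∈ A.filter (fun p => ¬ P p), (φ p / S) * ψ p
      ≤ ∑ p ∈ A, (φ p / S) * ψ p := by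
    refine Finset.sum_le_sum_of_subset_of_nonneg (Finset.filter_subset _ _) fun p _ _ => ?_
    exact mul_nonneg (div_nonneg (hφnn p) hS.le) (hψnn p)
  have hbad : (∑ p ∈ A.filter (fun p => ¬ P p), φ p) * (10 * φstarA) / S ≤ 8 * φstarA := by
    calc (∑ p ∈ A.filter (fun p => ¬ P p), φ p) * (10 * φstarA) / S
        = ∑ p ∈ A.filter (fun p => ¬ P p), (φ p / S) * (10 * φstarA) := by
          rw [Finset.sum_mul, Finset.sum_div]
          exact Finset.sum_congr rfl fun p _ => by ring
      _ ≤ ∑ p ∈ A, (φ p / S) * ψ p := le_trans hbad1 hbad2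
      _ ≤ 8 * φstarA := hE
  have hbadsum : ∑ p ∈ A.filter (fun p => ¬ P p), φ p ≤ 4 * S / 5 := by
    have h := (div_le_iff₀ hS).mp hbad
    nlinarith [hφstar, hS]
  have hsplit : (∑ p ∈ A.filter P, φ p) + (∑ p ∈ A.filter (fun p => ¬ P p), φ p) = S :=
    Finset.sum_filter_add_sum_filter_not A P φ
  have : S / 5 ≤ ∑ p ∈ A.filter P, φ p := by linarith
  exact this
end

section
/- Suppose in one sampling round each of the m unsettled clusters A is independently settled with probability at least 1 − e^{−kφ_A/(5φ_X)} where φ_U ≥ φ_X/2, and let X count the number of light clusters (those with φ_A ≤ φ_U/k) that get settled. If the light clusters have total cost α·φ_U, then E[X] ≥ αk/20. -/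
open scoped BigOperators

lemma half_le_one_sub_exp_neg {x : ℝ} (hx0 : 0 ≤ x) (hx1 : x ≤ 1) :
    x / 2 ≤ 1 - Real.exp (-x) := by
  have h1 : 1 + x ≤ Real.exp x := by linarith [Real.add_one_le_exp x]
  have hpos : (0:ℝ) < 1 + x := by linarith
  have h2 : Real.exp (-x) ≤ (1 + x)⁻¹ := by
    rw [Real.exp_neg]
    exact inv_anti₀ hpos h1
  have h3 : (1 + x)⁻¹ ≤ 1 - x / 2 := by
    rw [inv_le_iff_one_le_mul₀ hpos]
    nlinarith
  linarith

/-- Expected number of light clusters settled in one round is at least αk/20, where α is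
    the proportional cost of the light clusters. -/
theorem expected_settled_light_clusters {ι : Type*} (I : Finset ι)
    (φA p : ι → ℝ) (k φU φX α : ℝ)
    (hk : 0 < k) (hφX : 0 < φX) (hXU : φX ≤ 2 * φU) (hUX : φU ≤ φX)
    (hnn : ∀ i ∈ I, 0 ≤ φA i)
    (hlight : ∀ i ∈ I, φA i ≤ φU / k)
    (hp : ∀ i ∈ I, 1 - Real.exp (-(k * φA i / (5 * φX))) ≤ p i)
    (hα : ∑ i ∈ I, φA i = α * φU) :
    α * k / 20 ≤ ∑ i ∈ I, p i := by
  have hφU : 0 < φU := by linarith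
  have key : ∀ i ∈ I, k * φA i / (10 * φX) ≤ p i := by
    intro i hi
    have hx0 : 0 ≤ k * φA i / (5 * φX) := by
      apply div_nonneg (mul_nonneg hk.le (hnn i hi)) (by linarith)
    have hx1 : k * φA i / (5 * φX) ≤ 1 := by
      rw [div_le_one (by linarith)]
      have : k * φA i ≤ φU := by
        have := hlight i hi
        calc k * φA i ≤ k * (φU / k) := by
              exact mul_le_mul_of_nonneg_left this hk.le
          _ = φU := by field_simp
      linarith
    have := half_le_one_sub_exp_neg hx0 hx1
    have h := hp i hi
    have heq : k * φA i / (5 * φX) / 2 = k * φA i / (10 * φX) := by ring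
    linarith [heq ▸ this]
  have hsum : ∑ i ∈ I, k * φA i / (10 * φX) ≤ ∑ i ∈ I, p i :=
    Finset.sum_le_sum key
  have : ∑ i ∈ I, k * φA i / (10 * φX) = k * (α * φU) / (10 * φX) := by
    rw [← hα, Finset.mul_sum, Finset.sum_div]
  rw [this] at hsum
  have hαnn : 0 ≤ α * φU := by
    rw [← hα]; exact Finset.sum_nonneg hnn
  have : α * k / 20 ≤ k * (α * φU) / (10 * φX) := by
    have hα0 : 0 ≤ α := nonneg_of_mul_nonneg_right (by linarith [hαnn] : (0:ℝ) ≤ φU * α) hφU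
    rw [div_le_div_iff₀ (by norm_num) (by linarith)]
    nlinarith [mul_le_mul_of_nonneg_left hXU hα0, mul_pos hk hφX, hk.le]
  linarith
end

section
/- If a set C ⊆ X of centers satisfies φ_X(C) ≤ β·φ* and C' ⊆ C with |C'| = k is an α-approximate solution of the weighted instance (C, w) where w_c is the number of points of X whose closest center in C is c, then φ_X(C') = O(α·β)·φ* — specifically φ_X(C') ≤ c₀·α·(β+1)·φ* for an absolute constant c₀. -/
open scoped BigOperators

attribute [local instance] Classical.propDecidable

private lemma fiber_sum_eq {E : Type*} [DecidableEq E] (X C : Finset E) (nn : E → E)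
    (hnn : ∀ x ∈ X, nn x ∈ C) (f : E → ℝ) :
    ∑ c ∈ C, ((X.filter (fun x => nn x = c)).card : ℝ) * f c
      = ∑ x ∈ X, f (nn x) := by
  have h := Finset.sum_fiberwise_of_maps_to (g := nn) (f := fun x => f (nn x)) hnn
  rw [← h]
  refine Finset.sum_congr rfl fun c _ => ?_
  have hconst : ∑ x ∈ X.filter (fun x => nn x = c), f (nn x)
      = ∑ _x ∈ X.filter (fun x => nn x = c), f c :=
    Finset.sum_congr rfl fun x hx => by rw [(Finset.mem_filter.mp hx).2]
  rw [hconst, Finset.sum_const, nsmul_eq_mul]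

private lemma sq_add_le {a b : ℝ} (_ha : 0 ≤ a) (_hb : 0 ≤ b) :
    (a + b) ^ 2 ≤ 2 * a ^ 2 + 2 * b ^ 2 := by nlinarith [sq_nonneg (a - b)]

/-- Two-level clustering composition (Guha et al.): if φ_X(C) ≤ β φ* and C' is an
    α-approximate k-means solution of the weighted instance (C, w), where w_c counts the
    points of X assigned to c, then φ_X(C') ≤ c₀ · α · (β + 1) · φ* for an absolute
    constant c₀. -/
theorem two_level_clustering_composition :
    ∃ c₀ : ℝ, 0 < c₀ ∧
      ∀ (d : ℕ) (X C C' : Finset (EuclideanSpace ℝ (Fin d))) (k : ℕ)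
        (nn : EuclideanSpace ℝ (Fin d) → EuclideanSpace ℝ (Fin d))
        (α β φstar : ℝ),
        1 ≤ k → X.Nonempty → C.Nonempty → C'.Nonempty → C' ⊆ C → C'.card = k →
        1 ≤ α → 0 ≤ β → 0 ≤ φstar →
        -- φ* is the optimal k-means cost of X
        φstar = sInf {v : ℝ | ∃ S : Finset (EuclideanSpace ℝ (Fin d)),
          S.Nonempty ∧ S.card = k ∧
          v = ∑ x ∈ X, Metric.infDist x (S : Set (EuclideanSpace ℝ (Fin d))) ^ 2} →
        -- nn assigns each point of X to its closest center in C
        (∀ x ∈ X, nn x ∈ C ∧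
          ‖x - nn x‖ = Metric.infDist x (C : Set (EuclideanSpace ℝ (Fin d)))) →
        -- C is a β-approximation
        (∑ x ∈ X, Metric.infDist x (C : Set (EuclideanSpace ℝ (Fin d))) ^ 2 ≤ β * φstar) →
        -- C' is an α-approximate solution of the weighted instance (C, w)
        (∑ c ∈ C, ((X.filter (fun x => nn x = c)).card : ℝ)
            * Metric.infDist c ((C' : Finset _) : Set (EuclideanSpace ℝ (Fin d))) ^ 2
          ≤ α * sInf {v : ℝ | ∃ S : Finset (EuclideanSpace ℝ (Fin d)),
              S.Nonempty ∧ S.card = k ∧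
              v = ∑ c ∈ C, ((X.filter (fun x => nn x = c)).card : ℝ)
                * Metric.infDist c (S : Set (EuclideanSpace ℝ (Fin d))) ^ 2}) →
        ∑ x ∈ X, Metric.infDist x ((C' : Finset _) : Set (EuclideanSpace ℝ (Fin d))) ^ 2
          ≤ c₀ * α * (β + 1) * φstar := by
  refine ⟨10, by norm_num, ?_⟩
  intro d X C C' k nn α β φstar hk hX hC hC' hsub hcard hα hβ hφ hφdef hnn hCapprox hWapprox
  have hnnC : ∀ x ∈ X, nn x ∈ C := fun x hx => (hnn x hx).1
  set φC : ℝ := ∑ x ∈ X, Metric.infDist x (C : Set (EuclideanSpace ℝ (Fin d))) ^ 2 with hφC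
  set W : ℝ := ∑ c ∈ C, ((X.filter (fun x => nn x = c)).card : ℝ)
      * Metric.infDist c ((C' : Finset _) : Set (EuclideanSpace ℝ (Fin d))) ^ 2 with hW
  set A : Set ℝ := {v : ℝ | ∃ S : Finset (EuclideanSpace ℝ (Fin d)),
      S.Nonempty ∧ S.card = k ∧
      v = ∑ x ∈ X, Metric.infDist x (S : Set (EuclideanSpace ℝ (Fin d))) ^ 2} with hA
  set B : Set ℝ := {v : ℝ | ∃ S : Finset (EuclideanSpace ℝ (Fin d)),
      S.Nonempty ∧ S.card = k ∧
      v = ∑ c ∈ C, ((X.filter (fun x => nn x = c)).card : ℝ)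
        * Metric.infDist c (S : Set (EuclideanSpace ℝ (Fin d))) ^ 2} with hB
  have hdist : ∀ x ∈ X, dist x (nn x)
      = Metric.infDist x (C : Set (EuclideanSpace ℝ (Fin d))) := by
    intro x hx
    rw [dist_eq_norm]; exact (hnn x hx).2
  have hnonnegφC : 0 ≤ φC := Finset.sum_nonneg fun x _ => sq_nonneg _
  have hBbdd : BddBelow B := by
    refine ⟨0, fun v hv => ?_⟩
    obtain ⟨S, _, _, rfl⟩ := hv
    exact Finset.sum_nonneg fun c _ => mul_nonneg (Nat.cast_nonneg _) (sq_nonneg _)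
  have hAne : A.Nonempty := ⟨_, C', hC', hcard, rfl⟩
  have hkey : ∀ S : Finset (EuclideanSpace ℝ (Fin d)), S.Nonempty → S.card = k →
      (∑ c ∈ C, ((X.filter (fun x => nn x = c)).card : ℝ)
        * Metric.infDist c (S : Set (EuclideanSpace ℝ (Fin d))) ^ 2)
      ≤ 2 * φC + 2 * ∑ x ∈ X, Metric.infDist x (S : Set (EuclideanSpace ℝ (Fin d))) ^ 2 := by
    intro S _ _
    rw [fiber_sum_eq X C nn hnnC]
    have hstep : ∀ x ∈ X, Metric.infDist (nn x) (S : Set (EuclideanSpace ℝ (Fin d))) ^ 2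
        ≤ 2 * Metric.infDist x (C : Set (EuclideanSpace ℝ (Fin d))) ^ 2
          + 2 * Metric.infDist x (S : Set (EuclideanSpace ℝ (Fin d))) ^ 2 := by
      intro x hx
      have h1 : Metric.infDist (nn x) (S : Set (EuclideanSpace ℝ (Fin d)))
          ≤ Metric.infDist x (C : Set (EuclideanSpace ℝ (Fin d)))
            + Metric.infDist x (S : Set (EuclideanSpace ℝ (Fin d))) := by
        have h2 := Metric.infDist_le_infDist_add_dist (x := nn x) (y := x)
          (s := (S : Set (EuclideanSpace ℝ (Fin d))))
        rw [dist_comm, hdist x hx] at h2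
        linarith
      calc Metric.infDist (nn x) (S : Set (EuclideanSpace ℝ (Fin d))) ^ 2
          ≤ (Metric.infDist x (C : Set (EuclideanSpace ℝ (Fin d)))
              + Metric.infDist x (S : Set (EuclideanSpace ℝ (Fin d)))) ^ 2 :=
            pow_le_pow_left₀ Metric.infDist_nonneg h1 2
        _ ≤ _ := sq_add_le Metric.infDist_nonneg Metric.infDist_nonneg
    calc ∑ x ∈ X, Metric.infDist (nn x) (S : Set (EuclideanSpace ℝ (Fin d))) ^ 2
        ≤ ∑ x ∈ X, (2 * Metric.infDist x (C : Set (EuclideanSpace ℝ (Fin d))) ^ 2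
            + 2 * Metric.infDist x (S : Set (EuclideanSpace ℝ (Fin d))) ^ 2) :=
          Finset.sum_le_sum hstep
      _ = 2 * φC + 2 * ∑ x ∈ X, Metric.infDist x (S : Set (EuclideanSpace ℝ (Fin d))) ^ 2 := by
          rw [Finset.sum_add_distrib, ← Finset.mul_sum, ← Finset.mul_sum]
  have hWstar : sInf B ≤ 2 * φC + 2 * φstar := by
    have hlb : ∀ a ∈ A, (sInf B - 2 * φC) / 2 ≤ a := by
      intro a ha
      obtain ⟨S, hSne, hSk, rfl⟩ := ha
      have hmem : (∑ c ∈ C, ((X.filter (fun x => nn x = c)).card : ℝ)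
          * Metric.infDist c (S : Set (EuclideanSpace ℝ (Fin d))) ^ 2) ∈ B :=
        ⟨S, hSne, hSk, rfl⟩
      have h3 := le_trans (csInf_le hBbdd hmem) (hkey S hSne hSk)
      linarith
    have h4 := le_csInf hAne hlb
    rw [← hφdef] at h4
    linarith
  have hmain : ∑ x ∈ X, Metric.infDist x ((C' : Finset _) : Set (EuclideanSpace ℝ (Fin d))) ^ 2
      ≤ 2 * φC + 2 * W := by
    have hstep : ∀ x ∈ X,
        Metric.infDist x ((C' : Finset _) : Set (EuclideanSpace ℝ (Fin d))) ^ 2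
        ≤ 2 * Metric.infDist x (C : Set (EuclideanSpace ℝ (Fin d))) ^ 2
          + 2 * Metric.infDist (nn x) ((C' : Finset _) : Set (EuclideanSpace ℝ (Fin d))) ^ 2 := by
      intro x hx
      have h1 : Metric.infDist x ((C' : Finset _) : Set (EuclideanSpace ℝ (Fin d)))
          ≤ Metric.infDist x (C : Set (EuclideanSpace ℝ (Fin d)))
            + Metric.infDist (nn x) ((C' : Finset _) : Set (EuclideanSpace ℝ (Fin d))) := by
        have h2 := Metric.infDist_le_infDist_add_dist (x := x) (y := nn x)
          (s := ((C' : Finset _) : Set (EuclideanSpace ℝ (Fin d))))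
        rw [hdist x hx] at h2
        linarith
      calc Metric.infDist x ((C' : Finset _) : Set (EuclideanSpace ℝ (Fin d))) ^ 2
          ≤ (Metric.infDist x (C : Set (EuclideanSpace ℝ (Fin d)))
              + Metric.infDist (nn x) ((C' : Finset _) : Set (EuclideanSpace ℝ (Fin d)))) ^ 2 :=
            pow_le_pow_left₀ Metric.infDist_nonneg h1 2
        _ ≤ _ := sq_add_le Metric.infDist_nonneg Metric.infDist_nonneg
    calc ∑ x ∈ X, Metric.infDist x ((C' : Finset _) : Set (EuclideanSpace ℝ (Fin d))) ^ 2
        ≤ ∑ x ∈ X, (2 * Metric.infDist x (C : Set (EuclideanSpace ℝ (Fin d))) ^ 2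
            + 2 * Metric.infDist (nn x) ((C' : Finset _) : Set (EuclideanSpace ℝ (Fin d))) ^ 2) :=
          Finset.sum_le_sum hstep
      _ = 2 * φC + 2 * ∑ x ∈ X,
            Metric.infDist (nn x) ((C' : Finset _) : Set (EuclideanSpace ℝ (Fin d))) ^ 2 := by
          rw [Finset.sum_add_distrib, ← Finset.mul_sum, ← Finset.mul_sum]
      _ = 2 * φC + 2 * W := by rw [hW, fiber_sum_eq X C nn hnnC]
  have hWle : W ≤ α * (2 * φC + 2 * φstar) := by
    refine le_trans hWapprox ?_
    nlinarith [hWstar, hα]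
  nlinarith [hmain, hWle, hCapprox, hnonnegφC, hα, hβ, hφ,
    mul_nonneg (le_trans zero_le_one hα) hφ]
end
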